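/- If H is an m-step subquasi-ideal of a Leibniz algebra L over a field F, then [L,H^{(m+n+1)}] + [H^{(m+n+1)},L] ⊆ H^{(m+n)} for all n ≥ 1, where H^{(k)} denotes the k-th term of the derived series of H. -/

import Mathlib

/-! Basic definitions for (right) Leibniz algebras given by a bilinear bracket
on a vector space, following Towers, "Quasi-ideals of Leibniz algebras". -/

section LeibnizDefs

variable {F L : Type*} [Field F] [AddCommGroup L] [Module F L]

/-- The (right) Leibniz identity for a bilinear bracket `b`:
`[x,[y,z]] = [[x,y],z] - [[x,z],y]`. -/
def IsLeibniz (b : L →ₗ[F] L →ₗ[F] L) : Prop :=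
  ∀ x y z : L, b x (b y z) = b (b x y) z - b (b x z) y

/-- `[A,C]`: the span of all brackets `[a,c]` with `a ∈ A`, `c ∈ C`. -/
def bspan (b : L →ₗ[F] L →ₗ[F] L) (A C : Submodule F L) : Submodule F L :=
  Submodule.span F {z : L | ∃ a ∈ A, ∃ c ∈ C, z = b a c}

/-- A subalgebra is a subspace `H` with `[H,H] ⊆ H`. -/
def IsSubalgebra (b : L →ₗ[F] L →ₗ[F] L) (H : Submodule F L) : Prop :=
  bspan b H H ≤ H

/-- An ideal is a subspace `A` with `[A,L] + [L,A] ⊆ A`. -/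
def IsIdeal (b : L →ₗ[F] L →ₗ[F] L) (A : Submodule F L) : Prop :=
  bspan b A ⊤ ⊔ bspan b ⊤ A ≤ A

/-- A quasi-ideal of `L` is a subspace `H` with `[H,K] + [K,H] ⊆ H + K`
for every subspace `K` of `L`. -/
def IsQuasiIdeal (b : L →ₗ[F] L →ₗ[F] L) (H : Submodule F L) : Prop :=
  ∀ K : Submodule F L, bspan b H K ⊔ bspan b K H ≤ H ⊔ K

/-- `H` is a quasi-ideal of the subalgebra `E`: `H ⊆ E` and
`[H,K] + [K,H] ⊆ H + K` for every subspace `K` of `E`. -/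
def IsQuasiIdealIn (b : L →ₗ[F] L →ₗ[F] L) (H E : Submodule F L) : Prop :=
  H ≤ E ∧ ∀ K : Submodule F L, K ≤ E → bspan b H K ⊔ bspan b K H ≤ H ⊔ K

/-- `H` is an `m`-step subquasi-ideal of `L`: there is a chain of subalgebras
`H = H_m qu H_{m-1} qu ... qu H_0 = L`, each a quasi-ideal of the next.
(Here `C i` is `H_i`.) -/
def IsSubquasiIdealSteps (b : L →ₗ[F] L →ₗ[F] L) (m : ℕ) (H : Submodule F L) : Prop :=
  ∃ C : ℕ → Submodule F L, C 0 = ⊤ ∧ C m = H ∧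
    (∀ i ≤ m, IsSubalgebra b (C i)) ∧
    ∀ i < m, IsQuasiIdealIn b (C (i + 1)) (C i)

/-- `H` is a subquasi-ideal of `L` if it is an `m`-step subquasi-ideal for some `m`. -/
def IsSubquasiIdeal (b : L →ₗ[F] L →ₗ[F] L) (H : Submodule F L) : Prop :=
  ∃ m : ℕ, IsSubquasiIdealSteps b m H

/-- Lower central series: `lowerCentral b K n` is `K^{n+1}` in the paper's notation,
i.e. `K^1 = K`, `K^{k+1} = [K^k, K]`. -/
def lowerCentral (b : L →ₗ[F] L →ₗ[F] L) (K : Submodule F L) : ℕ → Submodule F L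
  | 0 => K
  | n + 1 => bspan b (lowerCentral b K n) K

/-- Derived series: `derSeries b H n` is `H^{(n+1)}` in the paper's notation,
i.e. `H^{(1)} = H`, `H^{(k+1)} = [H^{(k)}, H^{(k)}]`. -/
def derSeries (b : L →ₗ[F] L →ₗ[F] L) (H : Submodule F L) : ℕ → Submodule F L
  | 0 => H
  | n + 1 => bspan b (derSeries b H n) (derSeries b H n)

/-- The core `H_L` of `H`: the sum of all ideals of `L` contained in `H`. -/
def coreOf (b : L →ₗ[F] L →ₗ[F] L) (H : Submodule F L) : Submodule F L :=
  sSup {A : Submodule F L | IsIdeal b A ∧ A ≤ H}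

/-- A derivation of the bracket `b`. -/
def IsDerivation (b : L →ₗ[F] L →ₗ[F] L) (d : L →ₗ[F] L) : Prop :=
  ∀ x y : L, d (b x y) = b (d x) y + b x (d y)

/-- `I`: the span of all squares `[x,x]`, `x ∈ L`. -/
def sqSpan (b : L →ₗ[F] L →ₗ[F] L) : Submodule F L :=
  Submodule.span F {z : L | ∃ x : L, z = b x x}

/-- The centre `Z(L) = {z | [z,x] = [x,z] = 0 for all x}`. -/
def lcenter (b : L →ₗ[F] L →ₗ[F] L) : Submodule F L where
  carrier := {z : L | ∀ x : L, b z x = 0 ∧ b x z = 0}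
  zero_mem' := by intro x; simp
  add_mem' := by
    intro y z hy hz x
    obtain ⟨h1, h2⟩ := hy x
    obtain ⟨h3, h4⟩ := hz x
    constructor <;> simp [h1, h2, h3, h4]
  smul_mem' := by
    intro c z hz x
    obtain ⟨h1, h2⟩ := hz x
    constructor <;> simp [h1, h2]

/-- The centre of a subalgebra `E`, as a subspace of `L`:
`Z(E) = {z ∈ E | [z,x] = [x,z] = 0 for all x ∈ E}`. -/
def centerIn (b : L →ₗ[F] L →ₗ[F] L) (E : Submodule F L) : Submodule F L where
  carrier := {z : L | z ∈ E ∧ ∀ x ∈ E, b z x = 0 ∧ b x z = 0}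
  zero_mem' := ⟨E.zero_mem, by intro x _; simp⟩
  add_mem' := by
    intro y z hy hz
    refine ⟨E.add_mem hy.1 hz.1, fun x hx => ?_⟩
    obtain ⟨h1, h2⟩ := hy.2 x hx
    obtain ⟨h3, h4⟩ := hz.2 x hx
    constructor <;> simp [h1, h2, h3, h4]
  smul_mem' := by
    intro c z hz
    refine ⟨E.smul_mem c hz.1, fun x hx => ?_⟩
    obtain ⟨h1, h2⟩ := hz.2 x hx
    constructor <;> simp [h1, h2]

/-- The subalgebra generated by a set `S`. -/
def subalgGen (b : L →ₗ[F] L →ₗ[F] L) (S : Set L) : Submodule F L :=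
  sInf {K : Submodule F L | IsSubalgebra b K ∧ S ⊆ K}

/-- `x` is a left Engel element: for each `y` there is `n` with `R_x^n(y) = 0`,
where `R_x(y) = [y,x]`. -/
def IsLeftEngel (b : L →ₗ[F] L →ₗ[F] L) (x : L) : Prop :=
  ∀ y : L, ∃ n : ℕ, ((b.flip x) ^ n) y = 0

end LeibnizDefs

variable {F L : Type*} [Field F] [AddCommGroup L] [Module F L]

/-! A quasi-ideal `H` of `E` satisfies `[E,[H,H]] + [[H,H],E] ⊆ H`: writing `[x,h] = p + c • x`
with `p ∈ H`, the multiples of `x` cancel in the Leibniz identity. Peeling the chain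
`H = H_m ⊆ ⋯ ⊆ H_0 = L` one step at a time gives `[L,H^{(m+1)}] + [H^{(m+1)},L] ⊆ H`. Since each
`H^{(k)}` is an ideal of `H`, one more application of the Leibniz identity turns this into
`[L,H^{(k+1)}] + [H^{(k+1)},L] ⊆ H^{(k)}` for `k ≥ m + 1`. -/

section Bracket

variable {b : L →ₗ[F] L →ₗ[F] L}

lemma mem_bspan {A C : Submodule F L} {a c : L} (ha : a ∈ A) (hc : c ∈ C) :
    b a c ∈ bspan b A C :=
  Submodule.subset_span ⟨a, ha, c, hc, rfl⟩

lemma bspan_le {A C D : Submodule F L} (h : ∀ a ∈ A, ∀ c ∈ C, b a c ∈ D) :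
    bspan b A C ≤ D := by
  rw [bspan, Submodule.span_le]
  rintro z ⟨a, ha, c, hc, rfl⟩
  exact h a ha c hc

lemma bspan_mono {A A' C C' : Submodule F L} (hA : A ≤ A') (hC : C ≤ C') :
    bspan b A C ≤ bspan b A' C' :=
  bspan_le fun _ ha _ hc => mem_bspan (hA ha) (hC hc)

lemma bspan_sup_bspan_mono {E E' A A' : Submodule F L} (hE : E ≤ E') (hA : A ≤ A') :
    bspan b E A ⊔ bspan b A E ≤ bspan b E' A' ⊔ bspan b A' E' :=
  sup_le_sup (bspan_mono hE hA) (bspan_mono hA hE)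

lemma bspan_bspan_le_of_forall {E U V T : Submodule F L}
    (h : ∀ x ∈ E, ∀ u ∈ U, ∀ v ∈ V, b x (b u v) ∈ T ∧ b (b u v) x ∈ T) :
    bspan b E (bspan b U V) ⊔ bspan b (bspan b U V) E ≤ T := by
  refine sup_le (bspan_le fun x hx w hw => ?_) (bspan_le fun w hw x hx => ?_)
  · exact bspan_le (D := T.comap (b x)) (fun u hu v hv => (h x hx u hu v hv).1) hw
  · exact bspan_le (D := T.comap (b.flip x)) (fun u hu v hv => (h x hx u hu v hv).2) hw

lemma IsLeibniz.bspan_bspan_self_le (hb : IsLeibniz b) {E U P T : Submodule F L}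
    (hP : bspan b E U ⊔ bspan b U E ≤ P) (hT : bspan b P U ⊔ bspan b U P ≤ T) :
    bspan b E (bspan b U U) ⊔ bspan b (bspan b U U) E ≤ T := by
  rw [sup_le_iff] at hP hT
  refine bspan_bspan_le_of_forall fun x hx u hu v hv => ⟨?_, ?_⟩
  · rw [hb]
    exact sub_mem (hT.1 (mem_bspan (hP.1 (mem_bspan hx hu)) hv))
      (hT.1 (mem_bspan (hP.1 (mem_bspan hx hv)) hu))
  · rw [show b (b u v) x = b u (b v x) + b (b u x) v by rw [hb]; abel]
    exact add_mem (hT.2 (mem_bspan hu (hP.2 (mem_bspan hv hx))))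
      (hT.1 (mem_bspan (hP.2 (mem_bspan hu hx)) hv))

lemma derSeries_mono {H H' : Submodule F L} (h : H ≤ H') (k : ℕ) :
    derSeries b H k ≤ derSeries b H' k := by
  induction k with
  | zero => exact h
  | succ k ih => exact bspan_mono ih ih

lemma IsSubalgebra.derSeries_antitone {H : Submodule F L} (hH : IsSubalgebra b H) :
    Antitone (derSeries b H) := by
  refine antitone_nat_of_succ_le fun k => ?_
  induction k with
  | zero => exact hH
  | succ k ih => exact bspan_mono ih ih

lemma IsSubalgebra.bspan_derSeries_le (hb : IsLeibniz b) {H : Submodule F L}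
    (hH : IsSubalgebra b H) (k : ℕ) :
    bspan b H (derSeries b H k) ⊔ bspan b (derSeries b H k) H ≤ derSeries b H k := by
  induction k with
  | zero => exact sup_le hH hH
  | succ k ih => exact hb.bspan_bspan_self_le ih (sup_idem _).le

lemma IsQuasiIdealIn.isSubalgebra {H E : Submodule F L} (hq : IsQuasiIdealIn b H E) :
    IsSubalgebra b H := by
  simpa [IsSubalgebra] using hq.2 H hq.1

lemma IsQuasiIdealIn.exists_bracket_eq_add_smul {H E : Submodule F L}
    (hq : IsQuasiIdealIn b H E) {x h : L} (hx : x ∈ E) (hh : h ∈ H) :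
    (∃ p ∈ H, ∃ c : F, b h x = p + c • x) ∧ (∃ q ∈ H, ∃ c : F, b x h = q + c • x) := by
  have hK : F ∙ x ≤ E := (Submodule.span_singleton_le_iff_mem x E).mpr hx
  have hx' : x ∈ F ∙ x := Submodule.mem_span_singleton_self x
  have decompose : ∀ z ∈ H ⊔ F ∙ x, ∃ p ∈ H, ∃ c : F, z = p + c • x := by
    intro z hz
    obtain ⟨p, hp, y, hy, rfl⟩ := Submodule.mem_sup.mp hz
    obtain ⟨c, rfl⟩ := Submodule.mem_span_singleton.mp hy
    exact ⟨p, hp, c, rfl⟩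
  have hsub := hq.2 _ hK
  exact ⟨decompose _ (hsub (Submodule.mem_sup_left (mem_bspan hh hx'))),
    decompose _ (hsub (Submodule.mem_sup_right (mem_bspan hx' hh)))⟩

lemma IsQuasiIdealIn.bspan_bspan_self_le (hb : IsLeibniz b) {H E : Submodule F L}
    (hq : IsQuasiIdealIn b H E) :
    bspan b E (bspan b H H) ⊔ bspan b (bspan b H H) E ≤ H := by
  have hH := hq.isSubalgebra
  refine bspan_bspan_le_of_forall fun x hx u hu v hv => ?_
  obtain ⟨⟨pu, hpu, νu, epu⟩, ⟨qu, hqu, μu, equ⟩⟩ := hq.exists_bracket_eq_add_smul hx hu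
  obtain ⟨-, ⟨qv, hqv, μv, eqv⟩⟩ := hq.exists_bracket_eq_add_smul hx hv
  constructor
  · have key : b x (b u v) = b qu v + μu • qv - (b qv u + μv • qu) := by
      rw [hb, equ, eqv]
      simp only [map_add, map_smul, LinearMap.add_apply, LinearMap.smul_apply, equ, eqv]
      module
    rw [key]
    exact sub_mem (add_mem (hH (mem_bspan hqu hv)) (H.smul_mem _ hqv))
      (add_mem (hH (mem_bspan hqv hu)) (H.smul_mem _ hqu))
  · have key : b (b u v) x = b pu v + νu • qv - (b u qv + μv • pu) := by
      rw [show b (b u v) x = b (b u x) v - b u (b x v) by rw [hb u x v]; abel, epu, eqv]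
      simp only [map_add, map_smul, LinearMap.add_apply, LinearMap.smul_apply, eqv, epu]
      module
    rw [key]
    exact sub_mem (add_mem (hH (mem_bspan hpu hv)) (H.smul_mem _ hqv))
      (add_mem (hH (mem_bspan hu hqv)) (H.smul_mem _ hpu))

namespace IsSubquasiIdealSteps

lemma eq_top {H : Submodule F L} (hH : IsSubquasiIdealSteps b 0 H) : H = ⊤ := by
  obtain ⟨C, hC0, hCm, -⟩ := hH
  rw [← hCm, hC0]

lemma isSubalgebra {m : ℕ} {H : Submodule F L} (hH : IsSubquasiIdealSteps b m H) :
    IsSubalgebra b H := by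
  obtain ⟨C, -, rfl, hsub, -⟩ := hH
  exact hsub m le_rfl

lemma exists_of_succ {m : ℕ} {H : Submodule F L} (hH : IsSubquasiIdealSteps b (m + 1) H) :
    ∃ E, IsSubquasiIdealSteps b m E ∧ IsQuasiIdealIn b H E := by
  obtain ⟨C, hC0, rfl, hsub, hq⟩ := hH
  exact ⟨C m, ⟨C, hC0, rfl, fun i hi => hsub i (by omega), fun i hi => hq i (by omega)⟩,
    hq m (by omega)⟩

lemma bspan_derSeries_le (hb : IsLeibniz b) {m : ℕ} {H : Submodule F L}
    (hH : IsSubquasiIdealSteps b m H) :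
    bspan b ⊤ (derSeries b H m) ⊔ bspan b (derSeries b H m) ⊤ ≤ H := by
  induction m generalizing H with
  | zero => simp [hH.eq_top]
  | succ m ih =>
    obtain ⟨E, hE, hHE⟩ := hH.exists_of_succ
    cases m with
    | zero =>
      rw [hE.eq_top] at hHE
      exact hHE.bspan_bspan_self_le hb
    | succ m =>
      have hU : derSeries b H (m + 1) ≤ bspan b H H :=
        hHE.isSubalgebra.derSeries_antitone (Nat.le_add_left 1 m)
      exact hb.bspan_bspan_self_le
        ((bspan_sup_bspan_mono le_rfl (derSeries_mono hHE.1 _)).trans (ih hE))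
        ((bspan_sup_bspan_mono le_rfl hU).trans (hHE.bspan_bspan_self_le hb))

end IsSubquasiIdealSteps

end Bracket

/-- If `H` is an `m`-step subquasi-ideal of a Leibniz algebra `L`,
then `[L,H^{(m+n+1)}] + [H^{(m+n+1)},L] ⊆ H^{(m+n)}` for all `n ≥ 1`.
Here `H^{(k)} = derSeries b H (k-1)`. -/
theorem bracket_derSeries_le_of_subquasiIdealSteps (b : L →ₗ[F] L →ₗ[F] L) (hb : IsLeibniz b)
    (m : ℕ) (H : Submodule F L) (hH : IsSubquasiIdealSteps b m H) (n : ℕ) (hn : 1 ≤ n) :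
    bspan b ⊤ (derSeries b H (m + n)) ⊔ bspan b (derSeries b H (m + n)) ⊤ ≤
      derSeries b H (m + n - 1) := by
  obtain ⟨k, rfl⟩ : ∃ k, n = k + 1 := ⟨n - 1, by omega⟩
  rw [← add_assoc, Nat.add_sub_cancel]
  have hk : derSeries b H (m + k) ≤ derSeries b H m :=
    hH.isSubalgebra.derSeries_antitone (Nat.le_add_right m k)
  exact hb.bspan_bspan_self_le
    ((bspan_sup_bspan_mono le_rfl hk).trans (hH.bspan_derSeries_le hb))
    (hH.isSubalgebra.bspan_derSeries_le hb (m + k))
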